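/- Let G = ([s], E) be a directed graph in which every vertex has its in-degree equal to its out-degree and every vertex has out-degree at least αs for some α ≥ 1/2. Then all eigenvalues of M = D⁻¹W D⁻¹Wᵀ are real and nonnegative, the largest eigenvalue is λ₁(M) = 1, and the second largest eigenvalue satisfies λ₂(M) ≤ 1 − (2α − 1)s²/(d_max⁺)². -/

import Mathlib

/-!
Write `M = D⁻¹S` with `S = W D⁻¹ Wᵀ` positive semidefinite. An eigenvector `v` with `Mv = zv`
satisfies `v⋆Sv = z · v⋆Dv` with `v⋆Dv > 0`, so `z` is real and nonnegative.

Balance makes `M` row-stochastic, so `1` is an eigenvalue. Two vertices of out-degree `≥ αs`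
share at least `(2α - 1)s` out-neighbours, so every entry of `M` is at least
`c = (2α - 1)s / (d_max⁺)²`. A row-stochastic matrix with entries `≥ c` shrinks the oscillation
`max x - min x` of a real vector by the factor `1 - sc`; hence a real eigenvector is either
constant, with eigenvalue `1`, or has eigenvalue at most `1 - sc`.

This eigenvector argument does not see multiplicities: for `α > 1/2` the root `1` is simple
because all roots are nonnegative and sum to `tr M ≤ 1/α < 2`.
-/

open Finset Matrix

/-- The out-degree of vertex `i`: the number of `j` with an edge from `i` to `j`. -/
def outDeg {n : ℕ} (E : Fin n → Fin n → Bool) (i : Fin n) : ℕ :=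
  (Finset.univ.filter fun j => E i j = true).card

/-- The in-degree of vertex `j`: the number of `i` with an edge from `i` to `j`. -/
def inDeg {n : ℕ} (E : Fin n → Fin n → Bool) (j : Fin n) : ℕ :=
  (Finset.univ.filter fun i => E i j = true).card

/-- Maximum out-degree. -/
noncomputable def dmaxOut {n : ℕ} (E : Fin n → Fin n → Bool) : ℕ := sSup (Set.range (outDeg E))

/-- The binary adjacency matrix: `W i j = 1` iff there is a directed edge from `i` to `j`. -/
def Wbin {n : ℕ} (E : Fin n → Fin n → Bool) : Matrix (Fin n) (Fin n) ℝ :=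
  fun i j => if E i j = true then 1 else 0

/-- The inverse `D⁻¹` of the diagonal out-degree matrix `D = diag(d₁⁺, …, d_n⁺)`. -/
noncomputable def Dinv {n : ℕ} (E : Fin n → Fin n → Bool) : Matrix (Fin n) (Fin n) ℝ :=
  Matrix.diagonal fun i => (outDeg E i : ℝ)⁻¹

open scoped ComplexOrder

theorem Multiset.two_le_sum_of_one_mem_erase {R : Type*} [Semiring R] [PartialOrder R]
    [IsOrderedRing R] [DecidableEq R] {m : Multiset R} (h : ∀ z ∈ m, 0 ≤ z) (h1 : 1 ∈ m.erase 1) :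
    2 ≤ m.sum := by
  rw [← Multiset.cons_erase (Multiset.mem_of_mem_erase h1), Multiset.sum_cons,
    ← Multiset.cons_erase h1, Multiset.sum_cons, ← add_assoc, one_add_one_eq_two]
  exact le_add_of_nonneg_right (Multiset.sum_nonneg fun z hz =>
    h z (Multiset.mem_of_mem_erase (Multiset.mem_of_mem_erase hz)))

namespace Matrix

variable {n : Type*} [Fintype n] {A : Matrix n n ℝ} {c : ℝ}

theorem nonneg_of_mulVec_eq_smul_mulVec {P S : Matrix n n ℂ} (hP : P.PosDef) (hS : S.PosSemidef)
    {v : n → ℂ} (hv : v ≠ 0) {z : ℂ} (h : S *ᵥ v = z • (P *ᵥ v)) : 0 ≤ z := by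
  have hp := hP.dotProduct_mulVec_pos hv
  have hq := hS.dotProduct_mulVec_nonneg v
  rw [h, dotProduct_smul, smul_eq_mul] at hq
  simpa [hp.ne'] using div_nonneg hq hp.le

theorem exists_ne_zero_mulVec_eq_smul_of_map {μ : ℝ} {v : n → ℂ} (hv : v ≠ 0)
    (h : A.map (algebraMap ℝ ℂ) *ᵥ v = (μ : ℂ) • v) :
    ∃ x : n → ℝ, x ≠ 0 ∧ A *ᵥ x = μ • x := by
  have hre : A *ᵥ (fun i => (v i).re) = μ • fun i => (v i).re := by
    ext i
    simpa [mulVec, dotProduct, Complex.re_sum] using congrArg Complex.re (congrFun h i)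
  have him : A *ᵥ (fun i => (v i).im) = μ • fun i => (v i).im := by
    ext i
    simpa [mulVec, dotProduct, Complex.im_sum] using congrArg Complex.im (congrFun h i)
  by_cases hzero : (fun i => (v i).re) = 0
  · refine ⟨_, fun him0 => hv ?_, him⟩
    funext i
    exact Complex.ext (congrFun hzero i) (congrFun him0 i)
  · exact ⟨_, hzero, hre⟩

theorem mulVec_apply_sub_mulVec_apply_le (hA : ∀ i j, c ≤ A i j) (hrow : ∀ i, ∑ j, A i j = 1)
    {x : n → ℝ} {a b : ℝ} (ha : ∀ k, x k ≤ a) (hb : ∀ k, b ≤ x k) (i j : n) :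
    (A *ᵥ x) i - (A *ᵥ x) j ≤ (1 - Fintype.card n * c) * (a - b) := by
  have hsum : ∀ i, ∑ k, (A i k - c) = 1 - Fintype.card n * c := by
    simp [Finset.sum_sub_distrib, hrow]
  have hsplit : ∀ i, (A *ᵥ x) i = ∑ k, (A i k - c) * x k + c * ∑ k, x k := by
    simp [mulVec, dotProduct, sub_mul, Finset.mul_sum]
  calc (A *ᵥ x) i - (A *ᵥ x) j = ∑ k, (A i k - c) * x k - ∑ k, (A j k - c) * x k := by
        rw [hsplit, hsplit]; ring
    _ ≤ ∑ k, (A i k - c) * a - ∑ k, (A j k - c) * b := by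
        gcongr with k _ k _
        · exact sub_nonneg.2 (hA i k)
        · exact ha k
        · exact sub_nonneg.2 (hA j k)
        · exact hb k
    _ = (1 - Fintype.card n * c) * (a - b) := by
        rw [← Finset.sum_mul, ← Finset.sum_mul, hsum, hsum]; ring

theorem eq_one_or_le_of_mulVec_eq_smul (hA : ∀ i j, c ≤ A i j) (hrow : ∀ i, ∑ j, A i j = 1)
    {x : n → ℝ} (hx : x ≠ 0) {μ : ℝ} (h : A *ᵥ x = μ • x) :
    μ = 1 ∨ μ ≤ 1 - Fintype.card n * c := by
  have : Nonempty n := by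
    by_contra hn
    exact hx (funext fun i => (hn ⟨i⟩).elim)
  obtain ⟨i, hi⟩ := Finite.exists_max x
  obtain ⟨j, hj⟩ := Finite.exists_min x
  have key := mulVec_apply_sub_mulVec_apply_le hA hrow hi hj i j
  simp only [h, Pi.smul_apply, smul_eq_mul, ← mul_sub] at key
  rcases (hj i).eq_or_lt with hij | hij
  · left
    have hconst : x = fun _ => x i := funext fun k => le_antisymm (hi k) (hij ▸ hj k)
    have hxi : x i ≠ 0 := fun h0 => hx (hconst.trans (by ext; simp [h0]))
    have hAi := congrFun h i
    rw [hconst] at hAi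
    simp only [mulVec, dotProduct, ← Finset.sum_mul, hrow, one_mul, Pi.smul_apply,
      smul_eq_mul] at hAi
    exact (mul_left_eq_self₀.1 hAi.symm).resolve_right hxi
  · exact Or.inr (le_of_mul_le_mul_right key (sub_pos.2 hij))

variable [DecidableEq n]

theorem mem_roots_charpoly_map_iff {z : ℂ} :
    z ∈ (A.charpoly.map (algebraMap ℝ ℂ)).roots ↔
      ∃ v : n → ℂ, v ≠ 0 ∧ A.map (algebraMap ℝ ℂ) *ᵥ v = z • v := by
  rw [← charpoly_map, Polynomial.mem_roots (charpoly_monic _).ne_zero, ← charpoly_toLin',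
    ← Module.End.hasEigenvalue_iff_isRoot_charpoly]
  constructor
  · intro h
    obtain ⟨v, hv⟩ := h.exists_hasEigenvector
    exact ⟨v, hv.2, by simpa using hv.apply_eq_smul⟩
  · rintro ⟨v, hv, h⟩
    exact Module.End.hasEigenvalue_of_hasEigenvector
      (Module.End.hasEigenvector_iff.2 ⟨by simpa using h, hv⟩)

theorem nonneg_of_mem_roots_charpoly_diagonal_mul_mul_diagonal_mul_transpose {m : Type*}
    [Fintype m] [DecidableEq m] {a : n → ℝ} {b : m → ℝ} (ha : ∀ i, 0 < a i) (hb : ∀ j, 0 ≤ b j)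
    (B : Matrix n m ℝ) {z : ℂ}
    (hz : z ∈ ((diagonal a * B * diagonal b * Bᵀ).charpoly.map (algebraMap ℝ ℂ)).roots) :
    0 ≤ z := by
  obtain ⟨v, hv, h⟩ := mem_roots_charpoly_map_iff.1 hz
  set Bc := B.map (algebraMap ℝ ℂ)
  set S := Bc * diagonal (fun j => (b j : ℂ)) * Bcᴴ
  have hmap : (diagonal a * B * diagonal b * Bᵀ).map (algebraMap ℝ ℂ) =
      diagonal (fun i => (a i : ℂ)) * S := by
    have hBt : Bᵀ.map (algebraMap ℝ ℂ) = Bcᴴ := by ext; simp [Bc]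
    simp only [Matrix.map_mul, diagonal_map (map_zero _), hBt, S, Matrix.mul_assoc]
    rfl
  rw [hmap, ← mulVec_mulVec] at h
  have hP : (diagonal fun i => ((a i : ℂ))⁻¹).PosDef := .diagonal fun i => by simpa using ha i
  have hS : S.PosSemidef :=
    (PosSemidef.diagonal fun j => by simpa using hb j).mul_mul_conjTranspose_same Bc
  refine nonneg_of_mulVec_eq_smul_mulVec hP hS hv ?_
  calc S *ᵥ v
        = diagonal (fun i => ((a i : ℂ))⁻¹) *ᵥ (diagonal (fun i => (a i : ℂ)) *ᵥ (S *ᵥ v)) := by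
        rw [mulVec_mulVec, diagonal_mul_diagonal]; simp [(ha _).ne']
    _ = _ := by rw [h, mulVec_smul]

theorem eq_one_or_re_le_of_mem_roots_charpoly_map (hA : ∀ i j, c ≤ A i j)
    (hrow : ∀ i, ∑ j, A i j = 1) {z : ℂ} (hz : z ∈ (A.charpoly.map (algebraMap ℝ ℂ)).roots)
    (him : z.im = 0) : z = 1 ∨ z.re ≤ 1 - Fintype.card n * c := by
  obtain ⟨v, hv, h⟩ := mem_roots_charpoly_map_iff.1 hz
  have hz_re : z = (z.re : ℂ) := Complex.ext rfl (by simp [him])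
  rw [hz_re] at h ⊢
  obtain ⟨x, hx, hAx⟩ := exists_ne_zero_mulVec_eq_smul_of_map hv h
  simpa using eq_one_or_le_of_mulVec_eq_smul hA hrow hx hAx

theorem one_mem_roots_charpoly_map [Nonempty n] (hrow : ∀ i, ∑ j, A i j = 1) :
    (1 : ℂ) ∈ (A.charpoly.map (algebraMap ℝ ℂ)).roots := by
  refine mem_roots_charpoly_map_iff.2 ⟨fun _ => 1, fun h => ?_, ?_⟩
  · simpa using congrFun h (Classical.arbitrary n)
  · ext i
    simp [mulVec, dotProduct, ← Complex.ofReal_sum, hrow]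

theorem one_notMem_erase_roots_charpoly_map
    (hnonneg : ∀ z ∈ (A.charpoly.map (algebraMap ℝ ℂ)).roots, 0 ≤ z) (htrace : A.trace < 2) :
    1 ∉ (A.charpoly.map (algebraMap ℝ ℂ)).roots.erase 1 := by
  intro h1
  have := Multiset.two_le_sum_of_one_mem_erase hnonneg h1
  rw [← charpoly_map, ← trace_eq_sum_roots_charpoly, ← AddMonoidHom.map_trace] at this
  exact htrace.not_ge (Complex.real_le_real.1 (by simpa using this))

end Matrix

section Digraph
variable {n : ℕ} (E : Fin n → Fin n → Bool)

theorem outDeg_le_dmaxOut (i : Fin n) : outDeg E i ≤ dmaxOut E :=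
  le_csSup (Set.finite_range _).bddAbove ⟨i, rfl⟩

theorem sum_Wbin_apply_right (i : Fin n) : ∑ j, Wbin E i j = outDeg E i := by
  simp [Wbin, Finset.sum_boole, outDeg]

theorem sum_Wbin_apply_left (j : Fin n) : ∑ i, Wbin E i j = inDeg E j := by
  simp [Wbin, Finset.sum_boole, inDeg]

theorem outDeg_add_outDeg_le (i k : Fin n) :
    outDeg E i + outDeg E k ≤ n + #{j | E i j = true ∧ E k j = true} := by
  rw [outDeg, outDeg, ← card_union_add_card_inter, ← filter_and]
  exact Nat.add_le_add_right ((card_le_univ _).trans_eq (Fintype.card_fin n)) _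

theorem Dinv_mul_Wbin_mul_Dinv_mul_transpose_apply (i k : Fin n) :
    (Dinv E * Wbin E * Dinv E * (Wbin E)ᵀ) i k =
      ∑ j, Wbin E i j * Wbin E k j / (outDeg E i * outDeg E j) := by
  rw [mul_apply]
  simp only [Dinv, mul_diagonal, diagonal_mul, transpose_apply]
  exact sum_congr rfl fun j _ => by ring

theorem sum_Dinv_mul_Wbin_mul_Dinv_mul_transpose_apply (hbal : ∀ i, inDeg E i = outDeg E i)
    (hpos : ∀ i, 0 < outDeg E i) (i : Fin n) :
    ∑ k, (Dinv E * Wbin E * Dinv E * (Wbin E)ᵀ) i k = 1 := by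
  have hd : ∀ j, (outDeg E j : ℝ) ≠ 0 := fun j => by exact_mod_cast (hpos j).ne'
  simp only [Dinv_mul_Wbin_mul_Dinv_mul_transpose_apply]
  rw [sum_comm]
  calc ∑ j, ∑ k, Wbin E i j * Wbin E k j / (outDeg E i * outDeg E j)
      = ∑ j, Wbin E i j / (outDeg E i * outDeg E j) * ∑ k, Wbin E k j := by
        simp only [mul_sum]; exact sum_congr rfl fun j _ => sum_congr rfl fun k _ => by ring
    _ = (∑ j, Wbin E i j) / outDeg E i := by
        rw [sum_div]
        refine sum_congr rfl fun j _ => ?_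
        rw [sum_Wbin_apply_left, hbal]
        field_simp [hd]
    _ = 1 := by rw [sum_Wbin_apply_right, div_self (hd i)]

theorem le_Dinv_mul_Wbin_mul_Dinv_mul_transpose_apply {α : ℝ} (hdeg : ∀ i, α * n ≤ outDeg E i)
    (hpos : ∀ i, 0 < outDeg E i) (i k : Fin n) :
    (2 * α - 1) * n / (dmaxOut E : ℝ) ^ 2 ≤ (Dinv E * Wbin E * Dinv E * (Wbin E)ᵀ) i k := by
  set T : Finset (Fin n) := {j | E i j = true ∧ E k j = true}
  have hd : ∀ j, (0 : ℝ) < outDeg E j := fun j => by exact_mod_cast hpos j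
  have hT : (2 * α - 1) * n ≤ #T := by
    have := outDeg_add_outDeg_le E i k
    have := hdeg i
    have := hdeg k
    have : (outDeg E i + outDeg E k : ℝ) ≤ n + #T := by exact_mod_cast ‹_›
    linarith
  have hterm : ∀ j ∈ T, 1 / (dmaxOut E : ℝ) ^ 2 ≤
      Wbin E i j * Wbin E k j / (outDeg E i * outDeg E j) := by
    intro j hj
    obtain ⟨hij, hkj⟩ := (mem_filter.1 hj).2
    simp only [Wbin, hij, hkj, if_true, mul_one]
    gcongr
    · exact mul_pos (hd i) (hd j)
    · rw [sq]
      gcongr <;> exact_mod_cast outDeg_le_dmaxOut E _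
  rw [Dinv_mul_Wbin_mul_Dinv_mul_transpose_apply]
  calc (2 * α - 1) * n / (dmaxOut E : ℝ) ^ 2 ≤ #T * (1 / (dmaxOut E : ℝ) ^ 2) := by
        rw [mul_one_div]; gcongr
    _ ≤ ∑ j ∈ T, Wbin E i j * Wbin E k j / (outDeg E i * outDeg E j) := by
        rw [← nsmul_eq_mul, ← sum_const]; exact sum_le_sum hterm
    _ ≤ _ := sum_le_sum_of_subset_of_nonneg (subset_univ T) fun j _ _ => by
        unfold Wbin; positivity

theorem trace_Dinv_mul_Wbin_mul_Dinv_mul_transpose_le {a : ℝ} (ha : 0 < a)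
    (hdeg : ∀ i, a ≤ outDeg E i) : (Dinv E * Wbin E * Dinv E * (Wbin E)ᵀ).trace ≤ n / a := by
  have hd : ∀ j, (0 : ℝ) < outDeg E j := fun j => ha.trans_le (hdeg j)
  have hdiag : ∀ i, (Dinv E * Wbin E * Dinv E * (Wbin E)ᵀ) i i ≤ 1 / a := fun i => by
    calc _ = ∑ j, Wbin E i j * Wbin E i j / (outDeg E i * outDeg E j) :=
          Dinv_mul_Wbin_mul_Dinv_mul_transpose_apply E i i
      _ ≤ ∑ j, Wbin E i j / (outDeg E i * a) := by
          refine sum_le_sum fun j _ => ?_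
          by_cases hij : E i j = true
          · simp only [Wbin, hij, if_true, mul_one]
            gcongr
            exacts [mul_pos (hd i) ha, hdeg j]
          · simp [Wbin, hij]
      _ = 1 / a := by
          rw [← sum_div, sum_Wbin_apply_right]
          field_simp [(hd i).ne']
  calc _ ≤ ∑ _i : Fin n, 1 / a := sum_le_sum fun i _ => hdiag i
    _ = n / a := by rw [sum_const, card_univ, Fintype.card_fin, nsmul_eq_mul, mul_one_div]

end Digraph

/-- If every vertex of a digraph has in-degree equal to out-degree and out-degree at least
`αs` with `α ≥ 1/2`, then all eigenvalues of `M = D⁻¹WD⁻¹Wᵀ` (the roots of its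
characteristic polynomial over `ℂ`) are real and nonnegative, the largest eigenvalue is
`1`, and the second largest eigenvalue is at most `1 − (2α − 1)s²/(d_max⁺)²`. -/
theorem stmt11 (s : ℕ) (hs : 0 < s) (α : ℝ) (hα : 1 / 2 ≤ α) (E : Fin s → Fin s → Bool)
    (hbal : ∀ i : Fin s, inDeg E i = outDeg E i)
    (hdeg : ∀ i : Fin s, α * s ≤ (outDeg E i : ℝ))
    (M : Matrix (Fin s) (Fin s) ℝ)
    (hM : M = Dinv E * Wbin E * Dinv E * (Wbin E)ᵀ) :
    (∀ z ∈ (M.charpoly.map (algebraMap ℝ ℂ)).roots, z.im = 0 ∧ 0 ≤ z.re) ∧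
      (1 : ℂ) ∈ (M.charpoly.map (algebraMap ℝ ℂ)).roots ∧
      (∀ z ∈ (M.charpoly.map (algebraMap ℝ ℂ)).roots, z.re ≤ 1) ∧
      (∀ z ∈ ((M.charpoly.map (algebraMap ℝ ℂ)).roots).erase 1,
        z.re ≤ 1 - (2 * α - 1) * (s : ℝ) ^ 2 / (dmaxOut E : ℝ) ^ 2) := by
  subst hM
  have hαs : 0 < α * s := mul_pos (by linarith) (by exact_mod_cast hs)
  have hpos : ∀ i, 0 < outDeg E i := fun i => by exact_mod_cast hαs.trans_le (hdeg i)
  have hrow := sum_Dinv_mul_Wbin_mul_Dinv_mul_transpose_apply E hbal hpos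
  set M := Dinv E * Wbin E * Dinv E * (Wbin E)ᵀ
  have hnonneg : ∀ z ∈ (M.charpoly.map (algebraMap ℝ ℂ)).roots, 0 ≤ z := fun z =>
    nonneg_of_mem_roots_charpoly_diagonal_mul_mul_diagonal_mul_transpose
      (fun i => inv_pos.2 (Nat.cast_pos.2 (hpos i))) (fun i => inv_nonneg.2 (Nat.cast_nonneg _))
      (Wbin E)
  have hgap : ∀ z ∈ (M.charpoly.map (algebraMap ℝ ℂ)).roots,
      z = 1 ∨ z.re ≤ 1 - (2 * α - 1) * (s : ℝ) ^ 2 / (dmaxOut E : ℝ) ^ 2 := fun z hz => by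
    have := eq_one_or_re_le_of_mem_roots_charpoly_map
      (le_Dinv_mul_Wbin_mul_Dinv_mul_transpose_apply E hdeg hpos) hrow hz
      (Complex.nonneg_iff.1 (hnonneg z hz)).2.symm
    rwa [Fintype.card_fin, mul_div_assoc', mul_left_comm, ← sq] at this
  have hgap_nonneg : 0 ≤ (2 * α - 1) * (s : ℝ) ^ 2 / (dmaxOut E : ℝ) ^ 2 := by
    have : 0 ≤ 2 * α - 1 := by linarith
    positivity
  have : Nonempty (Fin s) := ⟨⟨0, hs⟩⟩
  refine ⟨fun z hz => ?_, one_mem_roots_charpoly_map hrow, fun z hz => ?_, fun z hz => ?_⟩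
  · obtain ⟨hre, him⟩ := Complex.nonneg_iff.1 (hnonneg z hz)
    exact ⟨him.symm, hre⟩
  · rcases hgap z hz with rfl | h
    · simp
    · linarith
  rcases eq_or_ne z 1 with rfl | hz1
  · rcases hα.eq_or_lt with rfl | hα
    · simp
    have htrace : M.trace < 2 := calc
      M.trace ≤ s / (α * s) := trace_Dinv_mul_Wbin_mul_Dinv_mul_transpose_le E hαs hdeg
      _ = 1 / α := by field_simp
      _ < 2 := by rw [div_lt_iff₀ (by linarith)]; linarith
    exact absurd hz (one_notMem_erase_roots_charpoly_map hnonneg htrace)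
  · exact (hgap z (Multiset.mem_of_mem_erase hz)).resolve_left hz1
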